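/- arXiv:math/9809168 — 2 statements merged into one kernel-verified Lean document; each statement's English description precedes it below -/
import Mathlib

section
/- Let s, t, p, q, r, k, h ∈ ℕ with s = 2p + r + k and t = 2q + r + h. Let A and B be disjoint finite sets with |A| = s and |B| = t. The number of permutations σ of A ∪ B with σ ∘ σ = id such that σ has exactly p two-cycles contained in A, exactly q two-cycles contained in B, exactly r two-cycles with one point in A and one point in B, exactly k fixed points in A, and exactly h fixed points in B, equals s! · t! / (p! · q! · r! · k! · h! · 2^{p+q}). -/
open scoped Classical
open Finset Function Sum
set_option linter.unusedSectionVars false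
set_option maxHeartbeats 1000000

namespace Stmt4Aux

variable {γ : Type*} [DecidableEq γ]


variable {γ : Type*} [DecidableEq γ]

/-- extend a function on the complement of `{a,b}` by the swap `a ↔ b`. -/
def ext2 (a b : γ) (g : {x : γ // x ≠ a ∧ x ≠ b} → {x : γ // x ≠ a ∧ x ≠ b}) (x : γ) : γ :=
  if hxa : x = a then b else if hxb : x = b then a else (g ⟨x, hxa, hxb⟩).1

lemma ext2_a (a b : γ) (g) : ext2 a b g a = b := by simp [ext2]

lemma ext2_b (a b : γ) (hab : b ≠ a) (g) : ext2 a b g b = a := by simp [ext2, hab]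

lemma ext2_other (a b : γ) (g) (x : γ) (hxa : x ≠ a) (hxb : x ≠ b) :
    ext2 a b g x = (g ⟨x, hxa, hxb⟩).1 := by simp [ext2, hxa, hxb]

/-- Restriction equivalence for fixed-point-free involutions with prescribed value at `a`. -/
def matchRestrict (a b : γ) (hab : b ≠ a) :
    {g : γ → γ // Involutive g ∧ (∀ x, g x ≠ x) ∧ g a = b} ≃
    {g : {x : γ // x ≠ a ∧ x ≠ b} → {x : γ // x ≠ a ∧ x ≠ b} //
      Involutive g ∧ ∀ x, g x ≠ x} where
  toFun := fun gp =>
    have hg := gp.2.1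
    have hfpf := gp.2.2.1
    have hga := gp.2.2.2
    ⟨fun x => ⟨gp.1 x.1, by
      set g := gp.1
      have hgb : g b = a := by rw [← hga, hg]
      refine ⟨fun hxa => ?_, fun hxb => ?_⟩
      · have h2 : g (g x.1) = g a := by rw [hxa]
        rw [hg, hga] at h2; exact x.2.2 h2
      · have h2 : g (g x.1) = g b := by rw [hxb]
        rw [hg, hgb] at h2; exact x.2.1 h2⟩,
     fun x => Subtype.ext (hg x.1),
     fun x hx => hfpf x.1 (congrArg Subtype.val hx)⟩
  invFun := fun gp =>
    have hg := gp.2.1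
    have hfpf := gp.2.2
    ⟨ext2 a b gp.1, by
      set g := gp.1
      intro x
      by_cases hxa : x = a
      · rw [hxa, ext2_a, ext2_b a b hab]
      by_cases hxb : x = b
      · rw [hxb, ext2_b a b hab, ext2_a]
      · rw [ext2_other a b g x hxa hxb,
          ext2_other a b g _ (g ⟨x, hxa, hxb⟩).2.1 (g ⟨x, hxa, hxb⟩).2.2]
        exact congrArg Subtype.val (hg ⟨x, hxa, hxb⟩),
     by
      set g := gp.1
      intro x
      by_cases hxa : x = a
      · rw [hxa, ext2_a]; exact hab
      by_cases hxb : x = b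
      · rw [hxb, ext2_b a b hab]; exact fun h => hab h.symm
      · rw [ext2_other a b g x hxa hxb]
        intro hcon
        exact hfpf ⟨x, hxa, hxb⟩ (Subtype.ext hcon),
     ext2_a a b gp.1⟩
  left_inv := by
    rintro ⟨g, hg, hfpf, hga⟩
    refine Subtype.ext (funext fun x => ?_)
    dsimp only
    by_cases hxa : x = a
    · rw [hxa, ext2_a, hga]
    by_cases hxb : x = b
    · rw [hxb, ext2_b a b hab, ← hga, hg]
    · rw [ext2_other a b _ x hxa hxb]
  right_inv := by
    rintro ⟨g, hg, hfpf⟩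
    refine Subtype.ext (funext fun x => ?_)
    refine Subtype.ext ?_
    show ext2 a b g x.1 = (g x).1
    rw [ext2_other a b g x.1 x.2.1 x.2.2]


theorem card_matchings : ∀ (n : ℕ) (γ : Type) [Fintype γ] [DecidableEq γ],
    Fintype.card γ = 2 * n →
    Fintype.card {g : γ → γ // Involutive g ∧ ∀ x, g x ≠ x} * (n.factorial * 2 ^ n)
      = (2 * n).factorial := by
  intro n
  induction n with
  | zero =>
    intro γ _ _ hγ
    have he : IsEmpty γ := Fintype.card_eq_zero_iff.mp (by simpa using hγ)
    have h1 : Fintype.card {g : γ → γ // Involutive g ∧ ∀ x, g x ≠ x} = 1 :=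
      Fintype.card_eq_one_iff.mpr
        ⟨⟨id, fun x => rfl, fun x => isEmptyElim x⟩,
         fun y => Subtype.ext (funext fun x => isEmptyElim x)⟩
    rw [h1]; norm_num
  | succ m ih =>
    intro γ _ _ hγ
    obtain ⟨a⟩ : Nonempty γ := Fintype.card_pos_iff.mp (by omega)
    set T := {g : γ → γ // Involutive g ∧ ∀ x, g x ≠ x} with hT
    have hfib : ∀ b : {b : γ // b ≠ a},
        Fintype.card {g : T // g.1 a = b.1} * (m.factorial * 2 ^ m) = (2 * m).factorial := by
      intro b
      have e1 : {g : T // g.1 a = b.1} ≃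
          {g : γ → γ // Involutive g ∧ (∀ x, g x ≠ x) ∧ g a = b.1} :=
        (Equiv.subtypeSubtypeEquivSubtypeInter (fun g : γ → γ => Involutive g ∧ ∀ x, g x ≠ x) (fun g => g a = b.1)).trans
          (Equiv.subtypeEquivRight fun g => by tauto)
      have hcard' : Fintype.card {x : γ // x ≠ a ∧ x ≠ b.1} = 2 * m := by
        have : (univ.filter fun x : γ => x ≠ a ∧ x ≠ b.1) = univ \ {a, b.1} := by
          ext x; simp [and_comm]
        rw [Fintype.card_subtype, this, card_sdiff_of_subset (by simp)]
        rw [card_insert_of_notMem (by simp [Ne.symm b.2]), card_singleton, card_univ, hγ]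
        omega
      rw [Fintype.card_congr (e1.trans (matchRestrict a b.1 b.2))]
      exact ih _ hcard'
    have hsig : Fintype.card T = ∑ b : {b : γ // b ≠ a}, Fintype.card {g : T // g.1 a = b.1} := by
      rw [← Fintype.card_sigma]
      refine Fintype.card_congr ?_
      refine (Equiv.sigmaFiberEquiv (fun g : T => (⟨g.1 a, g.2.2 a⟩ : {b : γ // b ≠ a}))).symm.trans ?_
      refine Equiv.sigmaCongrRight fun b => Equiv.subtypeEquivRight fun g => ?_
      constructor
      · intro hgb; exact congrArg Subtype.val hgb
      · intro hgb; exact Subtype.ext hgb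
    have hcb : Fintype.card {b : γ // b ≠ a} = 2 * m + 1 := by
      simp only [Fintype.card_subtype_compl, Fintype.card_subtype_eq]
      omega
    have hsum : Fintype.card T * (m.factorial * 2 ^ m) = (2 * m + 1) * (2 * m).factorial := by
      rw [hsig, Finset.sum_mul]
      rw [Finset.sum_congr rfl fun b _ => hfib b]
      rw [Finset.sum_const, card_univ, hcb, smul_eq_mul]
    calc Fintype.card T * ((m+1).factorial * 2 ^ (m+1))
        = (Fintype.card T * (m.factorial * 2 ^ m)) * (2 * (m+1)) := by
          rw [Nat.factorial_succ, pow_succ]; ring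
      _ = ((2*m+1) * (2*m).factorial) * (2*(m+1)) := by rw [hsum]
      _ = (2*(m+1)).factorial := by
          rw [show 2*(m+1) = (2*m+1)+1 by ring, Nat.factorial_succ,
            show 2*m+1 = (2*m)+1 from rfl, Nat.factorial_succ]
          ring


section Main

variable {α β : Type} [Fintype α] [Fintype β] [DecidableEq α] [DecidableEq β]


variable {α β : Type} [Fintype α] [Fintype β] [DecidableEq α] [DecidableEq β]

def KA (f : α ⊕ β → α ⊕ β) : Finset α := univ.filter fun a => f (inl a) = inl a
def RA (f : α ⊕ β → α ⊕ β) : Finset α := univ.filter fun a => (f (inl a)).isRight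
def KB (f : α ⊕ β → α ⊕ β) : Finset β := univ.filter fun b => f (inr b) = inr b
def RB (f : α ⊕ β → α ⊕ β) : Finset β := univ.filter fun b => (f (inr b)).isLeft
def PAs (f : α ⊕ β → α ⊕ β) : Finset α := univ.filter fun a => f (inl a) ≠ inl a ∧ (f (inl a)).isLeft
def PBs (f : α ⊕ β → α ⊕ β) : Finset β := univ.filter fun b => f (inr b) ≠ inr b ∧ (f (inr b)).isRight

lemma mem_KA {f : α ⊕ β → α ⊕ β} {a : α} : a ∈ KA f ↔ f (inl a) = inl a := by simp [KA]
lemma mem_RA {f : α ⊕ β → α ⊕ β} {a : α} : a ∈ RA f ↔ (f (inl a)).isRight := by simp [RA]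
lemma mem_KB {f : α ⊕ β → α ⊕ β} {b : β} : b ∈ KB f ↔ f (inr b) = inr b := by simp [KB]
lemma mem_RB {f : α ⊕ β → α ⊕ β} {b : β} : b ∈ RB f ↔ (f (inr b)).isLeft := by simp [RB]

lemma partitionA (f : α ⊕ β → α ⊕ β) :
    (KA f).card + (RA f).card + (PAs f).card = Fintype.card α := by
  have h1 : (KA f).card + (univ.filter fun a : α => ¬(f (inl a) = inl a)).card
      = Fintype.card α := by
    rw [← Finset.card_univ]
    exact Finset.card_filter_add_card_filter_not _
  have h2 : ((univ.filter fun a : α => ¬(f (inl a) = inl a)).filter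
        fun a => (f (inl a)).isRight).card
      + ((univ.filter fun a : α => ¬(f (inl a) = inl a)).filter
        fun a => ¬(f (inl a)).isRight).card
      = (univ.filter fun a : α => ¬(f (inl a) = inl a)).card :=
    Finset.card_filter_add_card_filter_not _
  have e1 : (univ.filter fun a : α => ¬(f (inl a) = inl a)).filter
      (fun a => (f (inl a)).isRight) = RA f := by
    rw [Finset.filter_filter]
    apply Finset.filter_congr
    intro a _
    constructor
    · exact fun hh => hh.2
    · intro hh
      refine ⟨fun hfix => ?_, hh⟩
      rw [hfix] at hh
      simp at hh
  have e2 : (univ.filter fun a : α => ¬(f (inl a) = inl a)).filter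
      (fun a => ¬(f (inl a)).isRight) = PAs f := by
    rw [Finset.filter_filter]
    apply Finset.filter_congr
    intro a _
    simp only [Sum.not_isRight]
  rw [e1, e2] at h2
  omega
  
lemma partitionB (f : α ⊕ β → α ⊕ β) :
    (KB f).card + (RB f).card + (PBs f).card = Fintype.card β := by
  have h1 : (KB f).card + (univ.filter fun b : β => ¬(f (inr b) = inr b)).card
      = Fintype.card β := by
    rw [← Finset.card_univ]
    exact Finset.card_filter_add_card_filter_not _
  have h2 : ((univ.filter fun b : β => ¬(f (inr b) = inr b)).filter
        fun b => (f (inr b)).isLeft).card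
      + ((univ.filter fun b : β => ¬(f (inr b) = inr b)).filter
        fun b => ¬(f (inr b)).isLeft).card
      = (univ.filter fun b : β => ¬(f (inr b) = inr b)).card :=
    Finset.card_filter_add_card_filter_not _
  have e1 : (univ.filter fun b : β => ¬(f (inr b) = inr b)).filter
      (fun b => (f (inr b)).isLeft) = RB f := by
    rw [Finset.filter_filter]
    apply Finset.filter_congr
    intro b _
    constructor
    · exact fun hh => hh.2
    · intro hh
      refine ⟨fun hfix => ?_, hh⟩
      rw [hfix] at hh
      simp at hh
  have e2 : (univ.filter fun b : β => ¬(f (inr b) = inr b)).filter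
      (fun b => ¬(f (inr b)).isLeft) = PBs f := by
    rw [Finset.filter_filter]
    apply Finset.filter_congr
    intro b _
    simp only [Sum.not_isLeft]
  rw [e1, e2] at h2
  omega

lemma card_RA_eq_card_RB (f : α ⊕ β → α ⊕ β) (hf : Involutive f) :
    (RA f).card = (RB f).card := by
  apply Finset.card_bij (fun a ha => (f (inl a)).getRight (mem_RA.mp ha))
  · intro a ha
    rw [mem_RB, Sum.inr_getRight, hf]
    rfl
  · intro a1 h1 a2 h2 heq
    have e1 : inr ((f (inl a1)).getRight (mem_RA.mp h1)) = f (inl a1) := Sum.inr_getRight _ _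
    have e2 : inr ((f (inl a2)).getRight (mem_RA.mp h2)) = f (inl a2) := Sum.inr_getRight _ _
    have : f (inl a1) = f (inl a2) := by rw [← e1, ← e2, heq]
    have := congrArg f this
    rw [hf, hf] at this
    exact Sum.inl.inj this
  · intro b hb
    refine ⟨(f (inr b)).getLeft (mem_RB.mp hb), ?_, ?_⟩
    · rw [mem_RA, Sum.inl_getLeft, hf]
      rfl
    · rw [Sum.getRight_eq_iff, Sum.inl_getLeft, hf]

lemma disj_KA_RA (f : α ⊕ β → α ⊕ β) : Disjoint (KA f) (RA f) := by
  rw [Finset.disjoint_left]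
  intro a haK haR
  rw [mem_KA] at haK
  rw [mem_RA, haK] at haR
  simp at haR

lemma disj_KB_RB (f : α ⊕ β → α ⊕ β) : Disjoint (KB f) (RB f) := by
  rw [Finset.disjoint_left]
  intro b hbK hbR
  rw [mem_KB] at hbK
  rw [mem_RB, hbK] at hbR
  simp at hbR

/-- counting pairs of disjoint finsets of prescribed sizes. -/
lemma cardDelta (γ : Type) [Fintype γ] [DecidableEq γ] (k r : ℕ) :
    Fintype.card {KR : Finset γ × Finset γ //
        KR.1.card = k ∧ KR.2.card = r ∧ Disjoint KR.1 KR.2}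
      = (Fintype.card γ).choose k * (Fintype.card γ - k).choose r := by
  have e : {KR : Finset γ × Finset γ // KR.1.card = k ∧ KR.2.card = r ∧ Disjoint KR.1 KR.2}
      ≃ Σ (K : {K : Finset γ // K.card = k}),
          {R : Finset γ // R.card = r ∧ Disjoint (K : Finset γ) R} :=
    { toFun := fun x => ⟨⟨x.1.1, x.2.1⟩, ⟨x.1.2, x.2.2.1, x.2.2.2⟩⟩
      invFun := fun y => ⟨(y.1.1, y.2.1), y.1.2, y.2.2.1, y.2.2.2⟩
      left_inv := fun x => rfl
      right_inv := fun y => rfl }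
  rw [Fintype.card_congr e, Fintype.card_sigma]
  have hinner : ∀ K : {K : Finset γ // K.card = k},
      Fintype.card {R : Finset γ // R.card = r ∧ Disjoint (K : Finset γ) R}
        = (Fintype.card γ - k).choose r := by
    intro K
    have e2 : {R : Finset γ // R.card = r ∧ Disjoint (K : Finset γ) R}
        ≃ {R : Finset γ // R ∈ (K : Finset γ)ᶜ.powersetCard r} := by
      refine Equiv.subtypeEquivRight fun R => ?_
      rw [Finset.mem_powersetCard]
      constructor
      · rintro ⟨h1, h2⟩
        exact ⟨fun x hx => Finset.mem_compl.mpr (Finset.disjoint_right.mp h2 hx), h1⟩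
      · rintro ⟨h1, h2⟩
        exact ⟨h2, Finset.disjoint_right.mpr fun x hx => Finset.mem_compl.mp (h1 hx)⟩
    rw [Fintype.card_congr e2, Fintype.card_coe, Finset.card_powersetCard,
      Finset.card_compl, K.2]
  rw [Finset.sum_congr rfl fun K _ => hinner K, Finset.sum_const, Finset.card_univ,
    Fintype.card_finset_len, smul_eq_mul]


section Decomp

variable (K R : Finset α) (K' R' : Finset β)

lemma isLeft_pa (f : α ⊕ β → α ⊕ β) (hR : RA f = R) {a : α} (ha : a ∉ R) :
    (f (inl a)).isLeft := by
  have h : a ∉ RA f := by rw [hR]; exact ha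
  rw [mem_RA] at h
  exact Sum.not_isRight.mp (by simpa using h)

lemma isRight_pb (f : α ⊕ β → α ⊕ β) (hR' : RB f = R') {b : β} (hb : b ∉ R') :
    (f (inr b)).isRight := by
  have h : b ∉ RB f := by rw [hR']; exact hb
  rw [mem_RB] at h
  exact Sum.not_isLeft.mp (by simpa using h)

lemma pa_mem (f : α ⊕ β → α ⊕ β) (hf : Involutive f) (hK : KA f = K) (hR : RA f = R)
    {a : α} (haK : a ∉ K) (hL : (f (inl a)).isLeft) :
    (f (inl a)).getLeft hL ∈ (K ∪ R)ᶜ := by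
  have hiy : inl ((f (inl a)).getLeft hL) = f (inl a) := Sum.inl_getLeft _ _
  have hfy : f (inl ((f (inl a)).getLeft hL)) = inl a := by rw [hiy, hf]
  have hne : f (inl a) ≠ inl a := by
    have h : a ∉ KA f := by rw [hK]; exact haK
    rwa [mem_KA] at h
  rw [mem_compl, mem_union, not_or]
  constructor
  · intro hyK
    have h2 : f (inl ((f (inl a)).getLeft hL)) = inl ((f (inl a)).getLeft hL) :=
      mem_KA.mp (by rw [hK]; exact hyK)
    rw [hfy] at h2
    exact hne (by rw [← hiy, ← h2])
  · intro hyR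
    have h2 : (f (inl ((f (inl a)).getLeft hL))).isRight := mem_RA.mp (by rw [hR]; exact hyR)
    rw [hfy] at h2
    simp at h2

lemma pb_mem (f : α ⊕ β → α ⊕ β) (hf : Involutive f) (hK : KB f = K') (hR : RB f = R')
    {b : β} (hbK : b ∉ K') (hL : (f (inr b)).isRight) :
    (f (inr b)).getRight hL ∈ (K' ∪ R')ᶜ := by
  have hiy : inr ((f (inr b)).getRight hL) = f (inr b) := Sum.inr_getRight _ _
  have hfy : f (inr ((f (inr b)).getRight hL)) = inr b := by rw [hiy, hf]
  have hne : f (inr b) ≠ inr b := by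
    have h : b ∉ KB f := by rw [hK]; exact hbK
    rwa [mem_KB] at h
  rw [mem_compl, mem_union, not_or]
  constructor
  · intro hyK
    have h2 : f (inr ((f (inr b)).getRight hL)) = inr ((f (inr b)).getRight hL) :=
      mem_KB.mp (by rw [hK]; exact hyK)
    rw [hfy] at h2
    exact hne (by rw [← hiy, ← h2])
  · intro hyR
    have h2 : (f (inr ((f (inr b)).getRight hL))).isLeft := mem_RB.mp (by rw [hR]; exact hyR)
    rw [hfy] at h2
    simp at h2

lemma compl_notK {x : α} (hx : x ∈ (K ∪ R)ᶜ) : x ∉ K := by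
  rw [mem_compl, mem_union, not_or] at hx; exact hx.1

lemma compl_notR {x : α} (hx : x ∈ (K ∪ R)ᶜ) : x ∉ R := by
  rw [mem_compl, mem_union, not_or] at hx; exact hx.2

/-- restriction of an involution to the paired part of `α`. -/
def fwA (f : α ⊕ β → α ⊕ β) (hf : Involutive f) (hK : KA f = K) (hR : RA f = R)
    (x : ↥((K ∪ R)ᶜ)) : ↥((K ∪ R)ᶜ) :=
  ⟨(f (inl (x : α))).getLeft (isLeft_pa R f hR (compl_notR K R x.2)),
    pa_mem K R f hf hK hR (compl_notK K R x.2) _⟩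

lemma fwA_invol (f : α ⊕ β → α ⊕ β) (hf : Involutive f) (hK : KA f = K) (hR : RA f = R) :
    Involutive (fwA K R f hf hK hR) := by
  intro x
  refine Subtype.ext ?_
  show Sum.getLeft (f (inl _)) _ = (x : α)
  rw [Sum.getLeft_eq_iff]
  show f (inl (Sum.getLeft (f (inl (x : α))) _)) = inl (x : α)
  rw [Sum.inl_getLeft]
  exact hf _

lemma fwA_fpf (f : α ⊕ β → α ⊕ β) (hf : Involutive f) (hK : KA f = K) (hR : RA f = R)
    (x : ↥((K ∪ R)ᶜ)) : fwA K R f hf hK hR x ≠ x := by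
  intro hcon
  have hval : Sum.getLeft (f (inl (x : α))) (isLeft_pa R f hR (compl_notR K R x.2)) = (x : α) :=
    congrArg Subtype.val hcon
  rw [Sum.getLeft_eq_iff] at hval
  have : (x : α) ∈ KA f := mem_KA.mpr hval
  rw [hK] at this
  exact compl_notK K R x.2 this

/-- restriction of an involution to the paired part of `β`. -/
def fwB (f : α ⊕ β → α ⊕ β) (hf : Involutive f) (hK : KB f = K') (hR : RB f = R')
    (x : ↥((K' ∪ R')ᶜ)) : ↥((K' ∪ R')ᶜ) :=
  ⟨(f (inr (x : β))).getRight (isRight_pb R' f hR (compl_notR K' R' x.2)),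
    pb_mem K' R' f hf hK hR (compl_notK K' R' x.2) _⟩

lemma fwB_invol (f : α ⊕ β → α ⊕ β) (hf : Involutive f) (hK : KB f = K') (hR : RB f = R') :
    Involutive (fwB K' R' f hf hK hR) := by
  intro x
  refine Subtype.ext ?_
  show Sum.getRight (f (inr _)) _ = (x : β)
  rw [Sum.getRight_eq_iff]
  show f (inr (Sum.getRight (f (inr (x : β))) _)) = inr (x : β)
  rw [Sum.inr_getRight]
  exact hf _

lemma fwB_fpf (f : α ⊕ β → α ⊕ β) (hf : Involutive f) (hK : KB f = K') (hR : RB f = R')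
    (x : ↥((K' ∪ R')ᶜ)) : fwB K' R' f hf hK hR x ≠ x := by
  intro hcon
  have hval : Sum.getRight (f (inr (x : β))) (isRight_pb R' f hR (compl_notR K' R' x.2)) = (x : β) :=
    congrArg Subtype.val hcon
  rw [Sum.getRight_eq_iff] at hval
  have : (x : β) ∈ KB f := mem_KB.mpr hval
  rw [hK] at this
  exact compl_notK K' R' x.2 this

lemma mixR_isRight (f : α ⊕ β → α ⊕ β) (hR : RA f = R) {a : α} (ha : a ∈ R) :
    (f (inl a)).isRight := mem_RA.mp (by rw [hR]; exact ha)

lemma mixL_isLeft (f : α ⊕ β → α ⊕ β) (hR' : RB f = R') {b : β} (hb : b ∈ R') :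
    (f (inr b)).isLeft := mem_RB.mp (by rw [hR']; exact hb)

/-- the mixed-pair bijection of an involution. -/
def fwE (f : α ⊕ β → α ⊕ β) (hf : Involutive f) (hR : RA f = R) (hR' : RB f = R') :
    ↥R ≃ ↥R' where
  toFun x := ⟨(f (inl (x : α))).getRight (mixR_isRight R f hR x.2), by
    rw [← hR', mem_RB, Sum.inr_getRight, hf]; rfl⟩
  invFun y := ⟨(f (inr (y : β))).getLeft (mixL_isLeft R' f hR' y.2), by
    rw [← hR, mem_RA, Sum.inl_getLeft, hf]; rfl⟩
  left_inv x := by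
    refine Subtype.ext ?_
    show Sum.getLeft _ _ = (x : α)
    rw [Sum.getLeft_eq_iff]
    show f (inr (Sum.getRight (f (inl (x : α))) _)) = inl (x : α)
    rw [Sum.inr_getRight]
    exact hf _
  right_inv y := by
    refine Subtype.ext ?_
    show Sum.getRight _ _ = (y : β)
    rw [Sum.getRight_eq_iff]
    show f (inl (Sum.getLeft (f (inr (y : β))) _)) = inr (y : β)
    rw [Sum.inl_getLeft]
    exact hf _


lemma mem_comp_of {K R : Finset α} {a : α} (haK : a ∉ K) (haR : a ∉ R) : a ∈ (K ∪ R)ᶜ := by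
  rw [mem_compl, mem_union, not_or]; exact ⟨haK, haR⟩

section Backward

variable (K R : Finset α) (K' R' : Finset β)
variable (gA : ↥((K ∪ R)ᶜ) → ↥((K ∪ R)ᶜ)) (gB : ↥((K' ∪ R')ᶜ) → ↥((K' ∪ R')ᶜ))
variable (e : ↥R ≃ ↥R')

/-- build an involution from the pieces. -/
def bw : α ⊕ β → α ⊕ β
  | inl a =>
    if haK : a ∈ K then inl a
    else if haR : a ∈ R then inr ((e ⟨a, haR⟩ : ↥R') : β)
    else inl ((gA ⟨a, mem_comp_of haK haR⟩ : ↥((K ∪ R)ᶜ)) : α)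
  | inr b =>
    if hbK : b ∈ K' then inr b
    else if hbR : b ∈ R' then inl ((e.symm ⟨b, hbR⟩ : ↥R) : α)
    else inr ((gB ⟨b, mem_comp_of hbK hbR⟩ : ↥((K' ∪ R')ᶜ)) : β)

lemma bw_inl_K {a : α} (haK : a ∈ K) : bw K R K' R' gA gB e (inl a) = inl a := by
  simp [bw, haK]

lemma bw_inl_R {a : α} (haK : a ∉ K) (haR : a ∈ R) :
    bw K R K' R' gA gB e (inl a) = inr ((e ⟨a, haR⟩ : ↥R') : β) := by
  simp [bw, haK, haR]

lemma bw_inl_P {a : α} (haK : a ∉ K) (haR : a ∉ R) :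
    bw K R K' R' gA gB e (inl a) = inl ((gA ⟨a, mem_comp_of haK haR⟩ : ↥((K ∪ R)ᶜ)) : α) := by
  simp [bw, haK, haR]

lemma bw_inr_K {b : β} (hbK : b ∈ K') : bw K R K' R' gA gB e (inr b) = inr b := by
  simp [bw, hbK]

lemma bw_inr_R {b : β} (hbK : b ∉ K') (hbR : b ∈ R') :
    bw K R K' R' gA gB e (inr b) = inl ((e.symm ⟨b, hbR⟩ : ↥R) : α) := by
  simp [bw, hbK, hbR]

lemma bw_inr_P {b : β} (hbK : b ∉ K') (hbR : b ∉ R') :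
    bw K R K' R' gA gB e (inr b) = inr ((gB ⟨b, mem_comp_of hbK hbR⟩ : ↥((K' ∪ R')ᶜ)) : β) := by
  simp [bw, hbK, hbR]

lemma bw_invol (hd : Disjoint K R) (hd' : Disjoint K' R')
    (hgA : Involutive gA) (hgB : Involutive gB) : Involutive (bw K R K' R' gA gB e) := by
  intro x
  cases x with
  | inl a =>
    by_cases haK : a ∈ K
    · rw [bw_inl_K K R K' R' gA gB e haK, bw_inl_K K R K' R' gA gB e haK]
    by_cases haR : a ∈ R
    · rw [bw_inl_R K R K' R' gA gB e haK haR]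
      have hc : ((e ⟨a, haR⟩ : ↥R') : β) ∈ R' := (e ⟨a, haR⟩).2
      have hcK : ((e ⟨a, haR⟩ : ↥R') : β) ∉ K' := fun hmem => 
        (Finset.disjoint_right.mp hd' hc) hmem
      rw [bw_inr_R K R K' R' gA gB e hcK hc]
      have h1 : (⟨((e ⟨a, haR⟩ : ↥R') : β), hc⟩ : ↥R') = e ⟨a, haR⟩ := Subtype.ext rfl
      rw [h1, Equiv.symm_apply_apply]
    · rw [bw_inl_P K R K' R' gA gB e haK haR]
      have hy := (gA ⟨a, mem_comp_of haK haR⟩).2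
      have hyK : ((gA ⟨a, mem_comp_of haK haR⟩ : ↥((K ∪ R)ᶜ)) : α) ∉ K := compl_notK K R hy
      have hyR : ((gA ⟨a, mem_comp_of haK haR⟩ : ↥((K ∪ R)ᶜ)) : α) ∉ R := compl_notR K R hy
      rw [bw_inl_P K R K' R' gA gB e hyK hyR]
      have h1 : (⟨((gA ⟨a, mem_comp_of haK haR⟩ : ↥((K ∪ R)ᶜ)) : α), mem_comp_of hyK hyR⟩ :
          ↥((K ∪ R)ᶜ)) = gA ⟨a, mem_comp_of haK haR⟩ := Subtype.ext rfl
      rw [h1, hgA]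
  | inr b =>
    by_cases hbK : b ∈ K'
    · rw [bw_inr_K K R K' R' gA gB e hbK, bw_inr_K K R K' R' gA gB e hbK]
    by_cases hbR : b ∈ R'
    · rw [bw_inr_R K R K' R' gA gB e hbK hbR]
      have hc : ((e.symm ⟨b, hbR⟩ : ↥R) : α) ∈ R := (e.symm ⟨b, hbR⟩).2
      have hcK : ((e.symm ⟨b, hbR⟩ : ↥R) : α) ∉ K := fun hmem =>
        (Finset.disjoint_right.mp hd hc) hmem
      rw [bw_inl_R K R K' R' gA gB e hcK hc]
      have h1 : (⟨((e.symm ⟨b, hbR⟩ : ↥R) : α), hc⟩ : ↥R) = e.symm ⟨b, hbR⟩ := Subtype.ext rfl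
      rw [h1, Equiv.apply_symm_apply]
    · rw [bw_inr_P K R K' R' gA gB e hbK hbR]
      have hy := (gB ⟨b, mem_comp_of hbK hbR⟩).2
      have hyK : ((gB ⟨b, mem_comp_of hbK hbR⟩ : ↥((K' ∪ R')ᶜ)) : β) ∉ K' := compl_notK K' R' hy
      have hyR : ((gB ⟨b, mem_comp_of hbK hbR⟩ : ↥((K' ∪ R')ᶜ)) : β) ∉ R' := compl_notR K' R' hy
      rw [bw_inr_P K R K' R' gA gB e hyK hyR]
      have h1 : (⟨((gB ⟨b, mem_comp_of hbK hbR⟩ : ↥((K' ∪ R')ᶜ)) : β), mem_comp_of hyK hyR⟩ :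
          ↥((K' ∪ R')ᶜ)) = gB ⟨b, mem_comp_of hbK hbR⟩ := Subtype.ext rfl
      rw [h1, hgB]

lemma KA_bw (hfA : ∀ x, gA x ≠ x) : KA (bw K R K' R' gA gB e) = K := by
  ext a
  rw [mem_KA]
  constructor
  · intro hfix
    by_contra haK
    by_cases haR : a ∈ R
    · rw [bw_inl_R K R K' R' gA gB e haK haR] at hfix
      exact nomatch hfix
    · rw [bw_inl_P K R K' R' gA gB e haK haR] at hfix
      have : (gA ⟨a, mem_comp_of haK haR⟩ : ↥((K ∪ R)ᶜ)) = ⟨a, mem_comp_of haK haR⟩ :=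
        Subtype.ext (by exact Sum.inl.inj hfix)
      exact hfA _ this
  · intro haK
    exact bw_inl_K K R K' R' gA gB e haK

lemma RA_bw (hd : Disjoint K R) : RA (bw K R K' R' gA gB e) = R := by
  ext a
  rw [mem_RA]
  by_cases haK : a ∈ K
  · rw [bw_inl_K K R K' R' gA gB e haK]
    simp only [Sum.isRight_inl, Bool.false_eq_true, false_iff]
    exact fun haR => (Finset.disjoint_left.mp hd haK) haR
  by_cases haR : a ∈ R
  · rw [bw_inl_R K R K' R' gA gB e haK haR]
    simp [haR]
  · rw [bw_inl_P K R K' R' gA gB e haK haR]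
    simp [haR]

lemma KB_bw (hfB : ∀ x, gB x ≠ x) : KB (bw K R K' R' gA gB e) = K' := by
  ext b
  rw [mem_KB]
  constructor
  · intro hfix
    by_contra hbK
    by_cases hbR : b ∈ R'
    · rw [bw_inr_R K R K' R' gA gB e hbK hbR] at hfix
      exact nomatch hfix
    · rw [bw_inr_P K R K' R' gA gB e hbK hbR] at hfix
      have : (gB ⟨b, mem_comp_of hbK hbR⟩ : ↥((K' ∪ R')ᶜ)) = ⟨b, mem_comp_of hbK hbR⟩ :=
        Subtype.ext (by exact Sum.inr.inj hfix)
      exact hfB _ this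
  · intro hbK
    exact bw_inr_K K R K' R' gA gB e hbK

lemma RB_bw (hd' : Disjoint K' R') : RB (bw K R K' R' gA gB e) = R' := by
  ext b
  rw [mem_RB]
  by_cases hbK : b ∈ K'
  · rw [bw_inr_K K R K' R' gA gB e hbK]
    simp only [Sum.isLeft_inr, Bool.false_eq_true, false_iff]
    exact fun hbR => (Finset.disjoint_left.mp hd' hbK) hbR
  by_cases hbR : b ∈ R'
  · rw [bw_inr_R K R K' R' gA gB e hbK hbR]
    simp [hbR]
  · rw [bw_inr_P K R K' R' gA gB e hbK hbR]
    simp [hbR]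

end Backward


/-- The decomposition of involutions with prescribed fixed/mixed sets. -/
def decompEquiv (hd : Disjoint K R) (hd' : Disjoint K' R') :
    {f : α ⊕ β → α ⊕ β // Involutive f ∧ KA f = K ∧ RA f = R ∧ KB f = K' ∧ RB f = R'} ≃
    ({g : ↥((K ∪ R)ᶜ) → ↥((K ∪ R)ᶜ) // Involutive g ∧ ∀ x, g x ≠ x} ×
     {g : ↥((K' ∪ R')ᶜ) → ↥((K' ∪ R')ᶜ) // Involutive g ∧ ∀ x, g x ≠ x} ×
     (↥R ≃ ↥R')) where
  toFun fp :=
    ⟨⟨fwA K R fp.1 fp.2.1 fp.2.2.1 fp.2.2.2.1,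
      fwA_invol K R fp.1 fp.2.1 fp.2.2.1 fp.2.2.2.1,
      fwA_fpf K R fp.1 fp.2.1 fp.2.2.1 fp.2.2.2.1⟩,
     ⟨fwB K' R' fp.1 fp.2.1 fp.2.2.2.2.1 fp.2.2.2.2.2,
      fwB_invol K' R' fp.1 fp.2.1 fp.2.2.2.2.1 fp.2.2.2.2.2,
      fwB_fpf K' R' fp.1 fp.2.1 fp.2.2.2.2.1 fp.2.2.2.2.2⟩,
     fwE R R' fp.1 fp.2.1 fp.2.2.2.1 fp.2.2.2.2.2⟩
  invFun d :=
    ⟨bw K R K' R' d.1.1 d.2.1.1 d.2.2,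
     bw_invol K R K' R' d.1.1 d.2.1.1 d.2.2 hd hd' d.1.2.1 d.2.1.2.1,
     KA_bw K R K' R' d.1.1 d.2.1.1 d.2.2 d.1.2.2,
     RA_bw K R K' R' d.1.1 d.2.1.1 d.2.2 hd,
     KB_bw K R K' R' d.1.1 d.2.1.1 d.2.2 d.2.1.2.2,
     RB_bw K R K' R' d.1.1 d.2.1.1 d.2.2 hd'⟩
  left_inv fp := by
    obtain ⟨f, hf, hK, hR, hK', hR'⟩ := fp
    refine Subtype.ext (funext fun x => ?_)
    show bw K R K' R' _ _ _ x = f x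
    cases x with
    | inl a =>
      by_cases haK : a ∈ K
      · rw [bw_inl_K K R K' R' _ _ _ haK]
        exact (mem_KA.mp (by rw [hK]; exact haK)).symm
      by_cases haR : a ∈ R
      · rw [bw_inl_R K R K' R' _ _ _ haK haR]
        exact Sum.inr_getRight _ _
      · rw [bw_inl_P K R K' R' _ _ _ haK haR]
        exact Sum.inl_getLeft _ _
    | inr b =>
      by_cases hbK : b ∈ K'
      · rw [bw_inr_K K R K' R' _ _ _ hbK]
        exact (mem_KB.mp (by rw [hK']; exact hbK)).symm
      by_cases hbR : b ∈ R'
      · rw [bw_inr_R K R K' R' _ _ _ hbK hbR]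
        exact Sum.inl_getLeft _ _
      · rw [bw_inr_P K R K' R' _ _ _ hbK hbR]
        exact Sum.inr_getRight _ _
  right_inv d := by
    refine Prod.ext ?_ (Prod.ext ?_ ?_)
    · refine Subtype.ext (funext fun x => Subtype.ext ?_)
      show Sum.getLeft _ _ = ((d.1.1 x : ↥((K ∪ R)ᶜ)) : α)
      rw [Sum.getLeft_eq_iff]
      dsimp only
      rw [bw_inl_P K R K' R' d.1.1 d.2.1.1 d.2.2 (compl_notK K R x.2) (compl_notR K R x.2)]
    · refine Subtype.ext (funext fun x => Subtype.ext ?_)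
      show Sum.getRight _ _ = ((d.2.1.1 x : ↥((K' ∪ R')ᶜ)) : β)
      rw [Sum.getRight_eq_iff]
      dsimp only
      rw [bw_inr_P K R K' R' d.1.1 d.2.1.1 d.2.2 (compl_notK K' R' x.2) (compl_notR K' R' x.2)]
    · refine Equiv.ext fun x => Subtype.ext ?_
      show Sum.getRight _ _ = ((d.2.2 x : ↥R') : β)
      have hxK : (x : α) ∉ K := fun hmem => (Finset.disjoint_left.mp hd hmem) x.2
      rw [Sum.getRight_eq_iff]
      dsimp only
      rw [bw_inl_R K R K' R' d.1.1 d.2.1.1 d.2.2 hxK x.2]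

end Decomp


abbrev DeltaS (γ : Type) [Fintype γ] [DecidableEq γ] (k r : ℕ) :=
  {KR : Finset γ × Finset γ // KR.1.card = k ∧ KR.2.card = r ∧ Disjoint KR.1 KR.2}

abbrev S3 (k r h : ℕ) :=
  {f : α ⊕ β → α ⊕ β // Involutive f ∧ (KA f).card = k ∧ (RA f).card = r ∧ (KB f).card = h}

abbrev Tset (K R : Finset α) (K' R' : Finset β) :=
  {f : α ⊕ β → α ⊕ β // Involutive f ∧ KA f = K ∧ RA f = R ∧ KB f = K' ∧ RB f = R'}

def pi3 (k r h : ℕ) (ff : S3 (α := α) (β := β) k r h) : DeltaS α k r × DeltaS β h r :=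
  (⟨(KA ff.1, RA ff.1), ff.2.2.1, ff.2.2.2.1, disj_KA_RA ff.1⟩,
   ⟨(KB ff.1, RB ff.1), ff.2.2.2.2,
     by rw [← card_RA_eq_card_RB ff.1 ff.2.1]; exact ff.2.2.2.1, disj_KB_RB ff.1⟩)

def fiberEquiv3 (k r h : ℕ) (x : DeltaS α k r × DeltaS β h r) :
    {ff : S3 (α := α) (β := β) k r h // pi3 k r h ff = x} ≃
    Tset x.1.1.1 x.1.1.2 x.2.1.1 x.2.1.2 where
  toFun ff := ⟨ff.1.1, ff.1.2.1,
    congrArg (fun z : DeltaS α k r × DeltaS β h r => z.1.1.1) ff.2,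
    congrArg (fun z : DeltaS α k r × DeltaS β h r => z.1.1.2) ff.2,
    congrArg (fun z : DeltaS α k r × DeltaS β h r => z.2.1.1) ff.2,
    congrArg (fun z : DeltaS α k r × DeltaS β h r => z.2.1.2) ff.2⟩
  invFun g := ⟨⟨g.1, g.2.1,
      by rw [g.2.2.1]; exact x.1.2.1,
      by rw [g.2.2.2.1]; exact x.1.2.2.1,
      by rw [g.2.2.2.2.1]; exact x.2.2.1⟩,
    Prod.ext (Subtype.ext (Prod.ext g.2.2.1 g.2.2.2.1))
      (Subtype.ext (Prod.ext g.2.2.2.2.1 g.2.2.2.2.2))⟩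
  left_inv ff := Subtype.ext (Subtype.ext rfl)
  right_inv g := Subtype.ext rfl

lemma mul_aux {A B E P Q a b r' : ℕ} (h1 : A * P = a) (h2 : B * Q = b) (h3 : E = r') :
    (A * (B * E)) * (P * Q) = a * (b * r') := by subst h1; subst h2; subst h3; ring

lemma card_Tset (p q r k h : ℕ)
    (hα : Fintype.card α = 2*p + r + k) (hβ : Fintype.card β = 2*q + r + h)
    (K R : Finset α) (K' R' : Finset β)
    (hK : K.card = k) (hR : R.card = r) (hd : Disjoint K R)
    (hK' : K'.card = h) (hR' : R'.card = r) (hd' : Disjoint K' R') :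
    Fintype.card (Tset K R K' R') * ((p.factorial * 2^p) * (q.factorial * 2^q))
      = (2*p).factorial * ((2*q).factorial * r.factorial) := by
  rw [Fintype.card_congr (decompEquiv K R K' R' hd hd')]
  rw [Fintype.card_prod, Fintype.card_prod]
  have hcA : Fintype.card ↥((K ∪ R)ᶜ) = 2*p := by
    rw [Fintype.card_coe, Finset.card_compl, Finset.card_union_of_disjoint hd, hα, hK, hR]
    omega
  have hcB : Fintype.card ↥((K' ∪ R')ᶜ) = 2*q := by
    rw [Fintype.card_coe, Finset.card_compl, Finset.card_union_of_disjoint hd', hβ, hK', hR']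
    omega
  have hMA := card_matchings p _ hcA
  have hMB := card_matchings q _ hcB
  have hRR' : Fintype.card ↥R = Fintype.card ↥R' := by
    rw [Fintype.card_coe, Fintype.card_coe, hR, hR']
  have hE : Fintype.card (↥R ≃ ↥R') = r.factorial := by
    rw [Fintype.card_equiv (Fintype.equivOfCardEq hRR'), Fintype.card_coe, hR]
  exact mul_aux hMA hMB hE

theorem main_count (p q r k h : ℕ)
    (hα : Fintype.card α = 2*p + r + k) (hβ : Fintype.card β = 2*q + r + h) :
    Fintype.card {f : α ⊕ β → α ⊕ β // Involutive f ∧ (PAs f).card = 2*p ∧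
        (PBs f).card = 2*q ∧ (RA f).card = r ∧ (KA f).card = k ∧ (KB f).card = h}
      * (p.factorial * q.factorial * r.factorial * k.factorial * h.factorial * 2^(p+q))
      = (Fintype.card α).factorial * (Fintype.card β).factorial := by
  have e0 : {f : α ⊕ β → α ⊕ β // Involutive f ∧ (PAs f).card = 2*p ∧
        (PBs f).card = 2*q ∧ (RA f).card = r ∧ (KA f).card = k ∧ (KB f).card = h}
      ≃ S3 (α := α) (β := β) k r h := by
    refine Equiv.subtypeEquivRight fun f => ?_
    constructor
    · rintro ⟨h1, _, _, h4, h5, h6⟩; exact ⟨h1, h5, h4, h6⟩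
    · rintro ⟨h1, h2, h3, h4⟩
      have pA := partitionA f
      have pB := partitionB f
      have hrr := card_RA_eq_card_RB f h1
      exact ⟨h1, by omega, by omega, h3, h2, h4⟩
  rw [Fintype.card_congr e0]
  have hcards : Fintype.card (S3 (α := α) (β := β) k r h)
      = ∑ x : DeltaS α k r × DeltaS β h r,
          Fintype.card {ff : S3 (α := α) (β := β) k r h // pi3 k r h ff = x} := by
    rw [← Finset.card_univ,
      Finset.card_eq_sum_card_fiberwise (f := pi3 (α := α) (β := β) k r h)
        (t := Finset.univ) (fun x _ => Finset.mem_univ _)]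
    refine Finset.sum_congr rfl fun x _ => ?_
    exact (Fintype.card_subtype _).symm
  have hfib : ∀ x : DeltaS α k r × DeltaS β h r,
      Fintype.card {ff : S3 (α := α) (β := β) k r h // pi3 k r h ff = x}
        * ((p.factorial * 2^p) * (q.factorial * 2^q))
      = (2*p).factorial * ((2*q).factorial * r.factorial) := by
    intro x
    rw [Fintype.card_congr (fiberEquiv3 k r h x)]
    exact card_Tset p q r k h hα hβ _ _ _ _ x.1.2.1 x.1.2.2.1 x.1.2.2.2
      x.2.2.1 x.2.2.2.1 x.2.2.2.2
  have key : Fintype.card (S3 (α := α) (β := β) k r h)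
        * ((p.factorial * 2^p) * (q.factorial * 2^q))
      = Fintype.card (DeltaS α k r × DeltaS β h r)
        * ((2*p).factorial * ((2*q).factorial * r.factorial)) := by
    rw [hcards, Finset.sum_mul, Finset.sum_congr rfl fun x _ => hfib x,
      Finset.sum_const, Finset.card_univ, smul_eq_mul]
  have hDelta : Fintype.card (DeltaS α k r × DeltaS β h r)
      = ((Fintype.card α).choose k * (Fintype.card α - k).choose r)
        * ((Fintype.card β).choose h * (Fintype.card β - h).choose r) := by
    rw [Fintype.card_prod, cardDelta, cardDelta]
  have eA : (Fintype.card α).factorial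
      = (Fintype.card α).choose k * k.factorial
        * ((Fintype.card α - k).choose r * (r.factorial * (2*p).factorial)) := by
    rw [← Nat.choose_mul_factorial_mul_factorial (show k ≤ Fintype.card α by omega)]
    rw [← Nat.choose_mul_factorial_mul_factorial (show r ≤ Fintype.card α - k by omega)]
    rw [show Fintype.card α - k - r = 2*p by omega]
    ring
  have eB : (Fintype.card β).factorial
      = (Fintype.card β).choose h * h.factorial
        * ((Fintype.card β - h).choose r * (r.factorial * (2*q).factorial)) := by
    rw [← Nat.choose_mul_factorial_mul_factorial (show h ≤ Fintype.card β by omega)]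
    rw [← Nat.choose_mul_factorial_mul_factorial (show r ≤ Fintype.card β - h by omega)]
    rw [show Fintype.card β - h - r = 2*q by omega]
    ring
  calc Fintype.card (S3 (α := α) (β := β) k r h)
        * (p.factorial * q.factorial * r.factorial * k.factorial * h.factorial * 2^(p+q))
      = (Fintype.card (S3 (α := α) (β := β) k r h)
          * ((p.factorial * 2^p) * (q.factorial * 2^q)))
        * (r.factorial * k.factorial * h.factorial) := by rw [pow_add]; ring
    _ = (Fintype.card (DeltaS α k r × DeltaS β h r)
          * ((2*p).factorial * ((2*q).factorial * r.factorial)))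
        * (r.factorial * k.factorial * h.factorial) := by rw [key]
    _ = (Fintype.card α).factorial * (Fintype.card β).factorial := by
        rw [hDelta, eA, eB]; ring

lemma card_filter_left' (P : α ⊕ β → Prop) (Q : α → Prop) [DecidablePred P] [DecidablePred Q]
    (hP : ∀ b : β, ¬ P (inr b)) (hQ : ∀ a : α, P (inl a) ↔ Q a) :
    (univ.filter P).card = (univ.filter Q).card := by
  rw [← Finset.card_toLeft_add_card_toRight (u := univ.filter P)]
  have h1 : (univ.filter P).toRight = ∅ := by
    ext b; simp [hP b]
  have h2 : (univ.filter P).toLeft = univ.filter Q := by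
    ext a; simp [hQ a]
  rw [h1, h2]
  simp

lemma card_filter_right' (P : α ⊕ β → Prop) (Q : β → Prop) [DecidablePred P] [DecidablePred Q]
    (hP : ∀ a : α, ¬ P (inl a)) (hQ : ∀ b : β, P (inr b) ↔ Q b) :
    (univ.filter P).card = (univ.filter Q).card := by
  rw [← Finset.card_toLeft_add_card_toRight (u := univ.filter P)]
  have h1 : (univ.filter P).toLeft = ∅ := by
    ext a; simp [hP a]
  have h2 : (univ.filter P).toRight = univ.filter Q := by
    ext b; simp [hQ b]
  rw [h1, h2]
  simp

def permEquiv (P : (α ⊕ β → α ⊕ β) → Prop) :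
    {σ : Equiv.Perm (α ⊕ β) // σ * σ = 1 ∧ P ⇑σ} ≃
    {f : α ⊕ β → α ⊕ β // Involutive f ∧ P f} where
  toFun σ := ⟨⇑σ.1, fun x => by
      simpa [Equiv.Perm.mul_apply] using Equiv.ext_iff.mp σ.2.1 x, σ.2.2⟩
  invFun f := ⟨f.2.1.toPerm f.1, Equiv.ext fun x => f.2.1 x, f.2.2⟩
  left_inv σ := Subtype.ext (Equiv.ext fun x => rfl)
  right_inv f := Subtype.ext rfl

end Main

end Stmt4Aux


open Stmt4Aux in
/-- Counting involutions of the disjoint union `Fin s ⊕ Fin t` (with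
`s = 2p + r + k`, `t = 2q + r + h`) having exactly `p` two-cycles inside the
left part, `q` two-cycles inside the right part, `r` mixed two-cycles, `k`
fixed points on the left and `h` fixed points on the right: their number is
`s! · t! / (p! · q! · r! · k! · h! · 2^(p+q))`.

A two-cycle contained in the left part corresponds to exactly `2p` left points
moved into the left part; a mixed two-cycle corresponds to exactly one left
point sent to the right part. -/
theorem stmt4 (s t p q r k h : ℕ) (hs : s = 2 * p + r + k) (ht : t = 2 * q + r + h) :
    (Finset.univ.filter (fun σ : Equiv.Perm (Fin s ⊕ Fin t) =>
        σ * σ = 1 ∧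
        (Finset.univ.filter (fun x : Fin s ⊕ Fin t =>
            x.isLeft ∧ σ x ≠ x ∧ (σ x).isLeft)).card = 2 * p ∧
        (Finset.univ.filter (fun x : Fin s ⊕ Fin t =>
            x.isRight ∧ σ x ≠ x ∧ (σ x).isRight)).card = 2 * q ∧
        (Finset.univ.filter (fun x : Fin s ⊕ Fin t =>
            x.isLeft ∧ (σ x).isRight)).card = r ∧
        (Finset.univ.filter (fun x : Fin s ⊕ Fin t =>
            x.isLeft ∧ σ x = x)).card = k ∧
        (Finset.univ.filter (fun x : Fin s ⊕ Fin t =>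
            x.isRight ∧ σ x = x)).card = h)).card
    = s.factorial * t.factorial /
        (p.factorial * q.factorial * r.factorial * k.factorial * h.factorial * 2 ^ (p + q)) := by
  have hα : Fintype.card (Fin s) = 2*p + r + k := by simp [hs]
  have hβ : Fintype.card (Fin t) = 2*q + r + h := by simp [ht]
  have h1 := (Fintype.card_subtype (fun σ : Equiv.Perm (Fin s ⊕ Fin t) =>
        σ * σ = 1 ∧
        (Finset.univ.filter (fun x : Fin s ⊕ Fin t =>
            x.isLeft ∧ σ x ≠ x ∧ (σ x).isLeft)).card = 2 * p ∧
        (Finset.univ.filter (fun x : Fin s ⊕ Fin t =>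
            x.isRight ∧ σ x ≠ x ∧ (σ x).isRight)).card = 2 * q ∧
        (Finset.univ.filter (fun x : Fin s ⊕ Fin t =>
            x.isLeft ∧ (σ x).isRight)).card = r ∧
        (Finset.univ.filter (fun x : Fin s ⊕ Fin t =>
            x.isLeft ∧ σ x = x)).card = k ∧
        (Finset.univ.filter (fun x : Fin s ⊕ Fin t =>
            x.isRight ∧ σ x = x)).card = h)).symm
  rw [h1]
  have e1 := permEquiv (α := Fin s) (β := Fin t) (P := fun f =>
        (Finset.univ.filter (fun x : Fin s ⊕ Fin t =>
            x.isLeft ∧ f x ≠ x ∧ (f x).isLeft)).card = 2 * p ∧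
        (Finset.univ.filter (fun x : Fin s ⊕ Fin t =>
            x.isRight ∧ f x ≠ x ∧ (f x).isRight)).card = 2 * q ∧
        (Finset.univ.filter (fun x : Fin s ⊕ Fin t =>
            x.isLeft ∧ (f x).isRight)).card = r ∧
        (Finset.univ.filter (fun x : Fin s ⊕ Fin t =>
            x.isLeft ∧ f x = x)).card = k ∧
        (Finset.univ.filter (fun x : Fin s ⊕ Fin t =>
            x.isRight ∧ f x = x)).card = h)
  rw [Fintype.card_congr e1]
  have hiff : ∀ f : Fin s ⊕ Fin t → Fin s ⊕ Fin t,
      (Function.Involutive f ∧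
        (Finset.univ.filter (fun x : Fin s ⊕ Fin t =>
            x.isLeft ∧ f x ≠ x ∧ (f x).isLeft)).card = 2 * p ∧
        (Finset.univ.filter (fun x : Fin s ⊕ Fin t =>
            x.isRight ∧ f x ≠ x ∧ (f x).isRight)).card = 2 * q ∧
        (Finset.univ.filter (fun x : Fin s ⊕ Fin t =>
            x.isLeft ∧ (f x).isRight)).card = r ∧
        (Finset.univ.filter (fun x : Fin s ⊕ Fin t =>
            x.isLeft ∧ f x = x)).card = k ∧
        (Finset.univ.filter (fun x : Fin s ⊕ Fin t =>
            x.isRight ∧ f x = x)).card = h) ↔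
      (Function.Involutive f ∧ (PAs f).card = 2*p ∧
        (PBs f).card = 2*q ∧ (RA f).card = r ∧ (KA f).card = k ∧ (KB f).card = h) := by
    intro f
    have c1 : (Finset.univ.filter (fun x : Fin s ⊕ Fin t =>
        x.isLeft ∧ f x ≠ x ∧ (f x).isLeft)).card = (PAs f).card :=
      card_filter_left' _ _ (fun b => by simp) (fun a => by simp)
    have c2 : (Finset.univ.filter (fun x : Fin s ⊕ Fin t =>
        x.isRight ∧ f x ≠ x ∧ (f x).isRight)).card = (PBs f).card :=
      card_filter_right' _ _ (fun a => by simp) (fun b => by simp)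
    have c3 : (Finset.univ.filter (fun x : Fin s ⊕ Fin t =>
        x.isLeft ∧ (f x).isRight)).card = (RA f).card :=
      card_filter_left' _ _ (fun b => by simp) (fun a => by simp)
    have c4 : (Finset.univ.filter (fun x : Fin s ⊕ Fin t =>
        x.isLeft ∧ f x = x)).card = (KA f).card :=
      card_filter_left' _ _ (fun b => by simp) (fun a => by simp)
    have c5 : (Finset.univ.filter (fun x : Fin s ⊕ Fin t =>
        x.isRight ∧ f x = x)).card = (KB f).card :=
      card_filter_right' _ _ (fun a => by simp) (fun b => by simp)
    rw [c1, c2, c3, c4, c5]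
  rw [Fintype.card_congr (Equiv.subtypeEquivRight hiff)]
  have key := main_count (α := Fin s) (β := Fin t) p q r k h hα hβ
  rw [Fintype.card_fin, Fintype.card_fin] at key
  have hpos : 0 < p.factorial * q.factorial * r.factorial * k.factorial * h.factorial
      * 2 ^ (p + q) := by positivity
  exact (Nat.div_eq_of_eq_mul_left hpos key.symm).symm
end

section
/- For τ in the upper half-plane ℍ = {τ ∈ ℂ : Im τ > 0} and z ∈ ℂ, one has θ_{0,1/2}(z/τ, −1/τ) = (−iτ)^{1/2} · exp(πi z²/τ) · θ_{1/2,0}(z, τ), where (−iτ)^{1/2} denotes the principal branch of the square root (note Re(−iτ) > 0). -/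
open Complex

/-- The theta function with characteristics `h, k`:
`θ_{h,k}(z, τ) = ∑_{n ∈ ℤ} exp(πi(n+h)²τ + 2πi(n+h)(z+k))`. -/
noncomputable def thetaChar (h k : ℝ) (z τ : ℂ) : ℂ :=
  ∑' n : ℤ,
    Complex.exp ((Real.pi : ℂ) * I * ((n : ℂ) + (h : ℂ)) ^ 2 * τ +
      2 * (Real.pi : ℂ) * I * ((n : ℂ) + (h : ℂ)) * (z + (k : ℂ)))

lemma thetaChar_zero_half (z τ : ℂ) :
    thetaChar 0 (1 / 2) z τ = jacobiTheta₂ (z + 1 / 2) τ := by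
  unfold thetaChar jacobiTheta₂ jacobiTheta₂_term
  refine tsum_congr fun n => ?_
  push_cast
  ring_nf

lemma thetaChar_half_zero (z τ : ℂ) :
    thetaChar (1 / 2) 0 z τ =
      Complex.exp ((Real.pi : ℂ) * I * τ / 4 + (Real.pi : ℂ) * I * z) *
        jacobiTheta₂ (z + τ / 2) τ := by
  unfold thetaChar jacobiTheta₂ jacobiTheta₂_term
  rw [← tsum_mul_left]
  refine tsum_congr fun n => ?_
  rw [← Complex.exp_add]
  push_cast
  ring_nf

/-- Modular transformation: for `τ` in the upper half-plane and `z ∈ ℂ`,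
`θ_{0,1/2}(z/τ, −1/τ) = (−iτ)^{1/2} · exp(πi z²/τ) · θ_{1/2,0}(z, τ)`,
with the principal branch of the square root. -/
theorem stmt8 (τ z : ℂ) (hτ : 0 < τ.im) :
    thetaChar 0 (1 / 2) (z / τ) (-1 / τ)
      = (-I * τ) ^ ((1 : ℂ) / 2) * Complex.exp ((Real.pi : ℂ) * I * z ^ 2 / τ) *
          thetaChar (1 / 2) 0 z τ := by
  have hτ0 : τ ≠ 0 := fun h => by simp [h] at hτ
  have hbase : -I * τ ≠ 0 := by
    simp [hτ0, I_ne_zero]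
  have hpow : (-I * τ) ^ ((1 : ℂ) / 2) ≠ 0 := by
    simp [Complex.cpow_eq_zero_iff, hbase, hτ0]
  have hexp : Complex.exp (-(Real.pi : ℂ) * I * (z + τ / 2) ^ 2 / τ) ≠ 0 :=
    Complex.exp_ne_zero _
  have hfe := jacobiTheta₂_functional_equation (z + τ / 2) τ
  have harg : (z + τ / 2) / τ = z / τ + 1 / 2 := by
    field_simp
  rw [harg] at hfe
  rw [thetaChar_zero_half, thetaChar_half_zero]
  have : jacobiTheta₂ (z / τ + 1 / 2) (-1 / τ)
      = (-I * τ) ^ ((1 : ℂ) / 2) * Complex.exp ((Real.pi : ℂ) * I * (z + τ / 2) ^ 2 / τ) *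
        jacobiTheta₂ (z + τ / 2) τ := by
    rw [hfe]
    have h1 : Complex.exp ((Real.pi : ℂ) * I * (z + τ / 2) ^ 2 / τ) *
        Complex.exp (-(Real.pi : ℂ) * I * (z + τ / 2) ^ 2 / τ) = 1 := by
      rw [← Complex.exp_add]
      rw [show (Real.pi : ℂ) * I * (z + τ / 2) ^ 2 / τ +
          -(Real.pi : ℂ) * I * (z + τ / 2) ^ 2 / τ = 0 by ring]
      exact Complex.exp_zero
    have h2 : (-I * τ) ^ ((1 : ℂ) / 2) * (1 / (-I * τ) ^ ((1 : ℂ) / 2)) = 1 := by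
      field_simp
    rw [show (-I * τ) ^ ((1 : ℂ) / 2) * Complex.exp ((Real.pi : ℂ) * I * (z + τ / 2) ^ 2 / τ) *
        (1 / (-I * τ) ^ ((1 : ℂ) / 2) * Complex.exp (-(Real.pi : ℂ) * I * (z + τ / 2) ^ 2 / τ) *
          jacobiTheta₂ (z / τ + 1 / 2) (-1 / τ))
        = ((-I * τ) ^ ((1 : ℂ) / 2) * (1 / (-I * τ) ^ ((1 : ℂ) / 2))) *
          (Complex.exp ((Real.pi : ℂ) * I * (z + τ / 2) ^ 2 / τ) *
            Complex.exp (-(Real.pi : ℂ) * I * (z + τ / 2) ^ 2 / τ)) *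
          jacobiTheta₂ (z / τ + 1 / 2) (-1 / τ) from by ring, h1, h2, one_mul, one_mul]
  rw [this]
  rw [show Complex.exp ((Real.pi : ℂ) * I * (z + τ / 2) ^ 2 / τ)
      = Complex.exp ((Real.pi : ℂ) * I * z ^ 2 / τ) *
        Complex.exp ((Real.pi : ℂ) * I * τ / 4 + (Real.pi : ℂ) * I * z) by
    rw [← Complex.exp_add]
    congr 1
    field_simp
    ring]
  ring
end
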